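/- arXiv:2408.09488 — 8 statements merged into one kernel-verified Lean document; each statement's English description precedes it below -/
import Mathlib

section
/- (Joyal) Let C be a bicartesian closed category in which A is isomorphic to the double negation [[A,0],0] for every object A. Then C is a preorder, i.e., for any two objects A and B there is at most one morphism from A to B. -/
open CategoryTheory CategoryTheory.Limits MonoidalCategory

/-!
In a cartesian closed category the initial object is strict, so there is at most one map
`Y ⊗ X ⟶ 0`; by currying, every negation `[Y, 0]` receives at most one map from each object.
If every object is isomorphic to its double negation, every object is a negation up to
isomorphism.
-/

section

variable {C : Type*} [Category C] [CartesianMonoidalCategory C] [MonoidalClosed C]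

instance hasStrictInitialObjects_of_monoidalClosed : HasStrictInitialObjects C :=
  ⟨fun f hI => strict_initial hI f⟩

instance subsingleton_hom_ihom_initial [HasInitial C] (X Y : C) :
    Subsingleton (X ⟶ (ihom Y).obj (⊥_ C)) :=
  ((ihom.adjunction Y).homEquiv X (⊥_ C)).subsingleton_congr.mp initial.subsingleton_to

end

theorem stmt1_general {C : Type*} [Category C] [CartesianMonoidalCategory C] [MonoidalClosed C]
    [HasInitial C]
    (h : ∀ A : C, Nonempty (A ≅ (ihom ((ihom A).obj (⊥_ C))).obj (⊥_ C))) :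
    ∀ (A B : C), Subsingleton (A ⟶ B) := by
  intro A B
  obtain ⟨e⟩ := h B
  exact ((Iso.refl A).homCongr e).subsingleton

/-- (Joyal) A bicartesian closed category in which every object `A` is isomorphic to its
double negation `[[A,0],0]` is a preorder: any two parallel morphisms are equal. -/
theorem stmt1 {C : Type*} [Category C] [CartesianMonoidalCategory C] [MonoidalClosed C]
    [HasBinaryCoproducts C] [HasInitial C]
    (h : ∀ A : C, Nonempty (A ≅ (ihom ((ihom A).obj (⊥_ C))).obj (⊥_ C))) :
    ∀ (A B : C), Subsingleton (A ⟶ B) :=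
  stmt1_general h
end

section
/- Let (C, ⊗, I) be a symmetric monoidal category equipped with a commutative comonoid structure on every object (maps ⟨⟩_A : A → I and Δ_A : A → A ⊗ A satisfying co-associativity, co-unitality, co-symmetry, and the compatibility conditions with ⊗ and I). If both ⟨⟩ and Δ are natural in A, then I is a terminal object and A ⊗ B, equipped with the projections p₀ = ρ_A ∘ (id_A ⊗ ⟨⟩_B) and p₁ = λ_B ∘ (⟨⟩_A ⊗ id_B), is a binary product of A and B. -/
/-!
Naturality of `e` together with `e_I = 𝟙` makes `e_A` the only map `A ⟶ I`. For the product,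
the mediating map of `f : X ⟶ A` and `g : X ⟶ B` is `Δ_X ≫ (f ⊗ g)`: naturality of `e` and
counitality give the two projection equations, and naturality of `Δ` reduces uniqueness to
`Δ_{A⊗B} ≫ (p₀ ⊗ p₁) = 𝟙`. Through the middle-four interchange `tensorμ`, `p₀ ⊗ p₁` discards the
second copy of `A` and the first copy of `B`, so by the compatibility of `Δ` with `⊗` that identity
is counitality on each factor.
-/

open CategoryTheory CategoryTheory.Limits CategoryTheory.MonoidalCategory

section Braided

variable {C : Type*} [Category C] [MonoidalCategory C] [BraidedCategory C]

lemma tensorμ_comp_rightUnitor_tensor_leftUnitor (X Y : C) :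
    tensorμ X (𝟙_ C) (𝟙_ C) Y ≫ ((ρ_ X).hom ⊗ₘ (λ_ Y).hom) = (ρ_ X).hom ⊗ₘ (λ_ Y).hom := by
  simp only [tensorμ, braiding_tensorUnit_left, MonoidalCategory.tensorHom_def]
  monoidal

lemma tensorμ_comp_discard_tensor_discard {X Y : C} (f : X ⟶ 𝟙_ C) (g : Y ⟶ 𝟙_ C) :
    tensorμ X Y X Y ≫ ((X ◁ f ≫ (ρ_ X).hom) ⊗ₘ (g ▷ Y ≫ (λ_ Y).hom)) =
      (X ◁ g ≫ (ρ_ X).hom) ⊗ₘ (f ▷ Y ≫ (λ_ Y).hom) := by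
  have := tensorμ_natural_assoc (𝟙 X) g f (𝟙 Y) ((ρ_ X).hom ⊗ₘ (λ_ Y).hom)
  simp only [id_tensorHom, tensorHom_id, tensorμ_comp_rightUnitor_tensor_leftUnitor,
    tensorHom_comp_tensorHom] at this
  exact this.symm

end Braided

section Comonoid

variable {C : Type*} [Category C] [MonoidalCategory C]
  (e : ∀ A : C, A ⟶ 𝟙_ C) (Δ : ∀ A : C, A ⟶ A ⊗ A)

lemma diag_comp_tensorHom_comp_fst (counit_right : ∀ A, Δ A ≫ A ◁ e A ≫ (ρ_ A).hom = 𝟙 A)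
    (e_nat : ∀ {A B : C} (f : A ⟶ B), f ≫ e B = e A) {X A B : C} (f : X ⟶ A) (g : X ⟶ B) :
    Δ X ≫ (f ⊗ₘ g) ≫ A ◁ e B ≫ (ρ_ A).hom = f := by
  calc Δ X ≫ (f ⊗ₘ g) ≫ A ◁ e B ≫ (ρ_ A).hom
      = Δ X ≫ X ◁ e X ≫ f ▷ 𝟙_ C ≫ (ρ_ A).hom := by
        rw [← id_tensorHom, tensorHom_comp_tensorHom_assoc, Category.comp_id, e_nat,
          MonoidalCategory.tensorHom_def'_assoc]
    _ = f := by rw [MonoidalCategory.rightUnitor_naturality, reassoc_of% counit_right]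

lemma diag_comp_tensorHom_comp_snd (counit_left : ∀ A, Δ A ≫ e A ▷ A ≫ (λ_ A).hom = 𝟙 A)
    (e_nat : ∀ {A B : C} (f : A ⟶ B), f ≫ e B = e A) {X A B : C} (f : X ⟶ A) (g : X ⟶ B) :
    Δ X ≫ (f ⊗ₘ g) ≫ e A ▷ B ≫ (λ_ B).hom = g := by
  calc Δ X ≫ (f ⊗ₘ g) ≫ e A ▷ B ≫ (λ_ B).hom
      = Δ X ≫ e X ▷ X ≫ 𝟙_ C ◁ g ≫ (λ_ B).hom := by
        rw [← tensorHom_id, tensorHom_comp_tensorHom_assoc, Category.comp_id, e_nat,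
          MonoidalCategory.tensorHom_def_assoc]
    _ = g := by rw [MonoidalCategory.leftUnitor_naturality, reassoc_of% counit_left]

def isLimitBinaryFanOfDiagCompTensor
    (counit_left : ∀ A, Δ A ≫ e A ▷ A ≫ (λ_ A).hom = 𝟙 A)
    (counit_right : ∀ A, Δ A ≫ A ◁ e A ≫ (ρ_ A).hom = 𝟙 A)
    (e_nat : ∀ {A B : C} (f : A ⟶ B), f ≫ e B = e A)
    (Δ_nat : ∀ {A B : C} (f : A ⟶ B), f ≫ Δ B = Δ A ≫ (f ⊗ₘ f)) {A B : C}
    (h : Δ (A ⊗ B) ≫ ((A ◁ e B ≫ (ρ_ A).hom) ⊗ₘ (e A ▷ B ≫ (λ_ B).hom)) = 𝟙 (A ⊗ B)) :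
    IsLimit (BinaryFan.mk (A ◁ e B ≫ (ρ_ A).hom) (e A ▷ B ≫ (λ_ B).hom)) :=
  BinaryFan.isLimitMk (fun s => Δ s.pt ≫ (s.fst ⊗ₘ s.snd))
    (fun s => by simpa using diag_comp_tensorHom_comp_fst e Δ counit_right e_nat s.fst s.snd)
    (fun s => by simpa using diag_comp_tensorHom_comp_snd e Δ counit_left e_nat s.fst s.snd)
    (fun s m hfst hsnd => by
      have hm := congrArg (m ≫ ·) h
      simp only [reassoc_of% Δ_nat m, tensorHom_comp_tensorHom, hfst, hsnd,
        Category.comp_id] at hm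
      exact hm.symm)

variable [BraidedCategory C]

lemma diag_tensor_comp_fst_tensor_snd
    (counit_left : ∀ A, Δ A ≫ e A ▷ A ≫ (λ_ A).hom = 𝟙 A)
    (counit_right : ∀ A, Δ A ≫ A ◁ e A ≫ (ρ_ A).hom = 𝟙 A) {A B : C}
    (Δ_tensor : Δ (A ⊗ B) ≫ tensorμ A B A B = Δ A ⊗ₘ Δ B) :
    Δ (A ⊗ B) ≫ ((A ◁ e B ≫ (ρ_ A).hom) ⊗ₘ (e A ▷ B ≫ (λ_ B).hom)) = 𝟙 (A ⊗ B) := by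
  rw [← tensorμ_comp_discard_tensor_discard, reassoc_of% Δ_tensor, tensorHom_comp_tensorHom,
    counit_right, counit_left, id_tensorHom_id]

end Comonoid

theorem stmt3_general {C : Type*} [Category C] [MonoidalCategory C] [SymmetricCategory C]
    (e : ∀ A : C, A ⟶ 𝟙_ C) (Δ : ∀ A : C, A ⟶ A ⊗ A)
    (counit_left : ∀ A : C, Δ A ≫ (e A ⊗ₘ 𝟙 A) ≫ (λ_ A).hom = 𝟙 A)
    (counit_right : ∀ A : C, Δ A ≫ (𝟙 A ⊗ₘ e A) ≫ (ρ_ A).hom = 𝟙 A)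
    (e_unit : e (𝟙_ C) = 𝟙 (𝟙_ C))
    (Δ_tensor : ∀ A B : C,
      Δ (A ⊗ B) ≫ (α_ A B (A ⊗ B)).hom
        ≫ (𝟙 A ⊗ₘ ((α_ B A B).inv ≫ ((β_ B A).hom ⊗ₘ 𝟙 B) ≫ (α_ A B B).hom))
        ≫ (α_ A A (B ⊗ B)).inv
      = Δ A ⊗ₘ Δ B)
    (e_nat : ∀ {A B : C} (f : A ⟶ B), f ≫ e B = e A)
    (Δ_nat : ∀ {A B : C} (f : A ⟶ B), f ≫ Δ B = Δ A ≫ (f ⊗ₘ f)) :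
    Nonempty (IsTerminal (𝟙_ C)) ∧
    ∀ A B : C, Nonempty (IsLimit (BinaryFan.mk
      ((𝟙 A ⊗ₘ e B) ≫ (ρ_ A).hom) ((e A ⊗ₘ 𝟙 B) ≫ (λ_ B).hom))) := by
  simp only [id_tensorHom, tensorHom_id] at counit_left counit_right ⊢
  have Δ_tensorμ : ∀ A B : C, Δ (A ⊗ B) ≫ tensorμ A B A B = Δ A ⊗ₘ Δ B := fun A B => by
    rw [← Δ_tensor]
    simp [tensorμ]
  refine ⟨⟨IsTerminal.ofUniqueHom e fun A m => ?_⟩, fun A B => ⟨?_⟩⟩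
  · simpa only [e_unit, Category.comp_id] using e_nat m
  · exact isLimitBinaryFanOfDiagCompTensor e Δ counit_left counit_right e_nat Δ_nat
      (diag_tensor_comp_fst_tensor_snd e Δ counit_left counit_right (Δ_tensorμ A B))

/-- If a symmetric monoidal category carries a commutative comonoid structure on every
object (deleting `e` and cloning `Δ`, satisfying co-associativity, co-unitality,
co-symmetry and the compatibility conditions with `⊗` and `I`) which is moreover
natural (uniform) in the object, then the unit `I` is a terminal object and
`A ⊗ B`, equipped with the projections `p₀ = (id_A ⊗ e_B) ≫ ρ_A` and
`p₁ = (e_A ⊗ id_B) ≫ λ_B`, is a binary product of `A` and `B`. -/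
theorem stmt3 {C : Type*} [Category C] [MonoidalCategory C] [SymmetricCategory C]
    (e : ∀ A : C, A ⟶ 𝟙_ C) (Δ : ∀ A : C, A ⟶ A ⊗ A)
    (coassoc : ∀ A : C, Δ A ≫ (Δ A ⊗ₘ 𝟙 A) ≫ (α_ A A A).hom = Δ A ≫ (𝟙 A ⊗ₘ Δ A))
    (counit_left : ∀ A : C, Δ A ≫ (e A ⊗ₘ 𝟙 A) ≫ (λ_ A).hom = 𝟙 A)
    (counit_right : ∀ A : C, Δ A ≫ (𝟙 A ⊗ₘ e A) ≫ (ρ_ A).hom = 𝟙 A)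
    (cosymm : ∀ A : C, Δ A ≫ (β_ A A).hom = Δ A)
    (e_unit : e (𝟙_ C) = 𝟙 (𝟙_ C))
    (Δ_unit : Δ (𝟙_ C) = (λ_ (𝟙_ C)).inv)
    (Δ_tensor : ∀ A B : C,
      Δ (A ⊗ B) ≫ (α_ A B (A ⊗ B)).hom
        ≫ (𝟙 A ⊗ₘ ((α_ B A B).inv ≫ ((β_ B A).hom ⊗ₘ 𝟙 B) ≫ (α_ A B B).hom))
        ≫ (α_ A A (B ⊗ B)).inv
      = Δ A ⊗ₘ Δ B)
    (e_tensor : ∀ A B : C, e (A ⊗ B) = (e A ⊗ₘ e B) ≫ (λ_ (𝟙_ C)).hom)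
    (e_nat : ∀ {A B : C} (f : A ⟶ B), f ≫ e B = e A)
    (Δ_nat : ∀ {A B : C} (f : A ⟶ B), f ≫ Δ B = Δ A ≫ (f ⊗ₘ f)) :
    Nonempty (IsTerminal (𝟙_ C)) ∧
    ∀ A B : C, Nonempty (IsLimit (BinaryFan.mk
      ((𝟙 A ⊗ₘ e B) ≫ (ρ_ A).hom) ((e A ⊗ₘ 𝟙 B) ≫ (λ_ B).hom))) :=
  stmt3_general e Δ counit_left counit_right e_unit Δ_tensor e_nat Δ_nat
end

section
/- (No-deleting theorem) Let (C, ⊗, I, [-,-], ⊥) be a compact closed category. If there is a natural transformation ⟨⟩_A : A → I with ⟨⟩_I = id_I, then every hom-set Hom(A, B) is a singleton. -/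
open CategoryTheory CategoryTheory.Limits CategoryTheory.MonoidalCategory

/-!
Naturality of `e` at a map `f : A ⟶ I` together with `e_I = id` gives `f = e_A`, so `I` is
terminal. From `[I, I] ≅ [I, ⊥] ⊗ I` we get `⊥ ≅ I`, so `⊥` is terminal too. Since `⊥` is
dualizing, `Hom(A, B) ≅ Hom(A, [[B, ⊥], ⊥]) ≅ Hom([B, ⊥] ⊗ A, ⊥)`, which has exactly one element.
-/

namespace CategoryTheory

def Limits.IsTerminal.ofNatural {C : Type*} [Category C] {X : C} (e : ∀ A : C, A ⟶ X)
    (e_nat : ∀ {A B : C} (f : A ⟶ B), f ≫ e B = e A) (e_self : e X = 𝟙 X) : IsTerminal X :=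
  IsTerminal.ofUniqueHom e fun A f => by simpa [e_self] using e_nat f

namespace MonoidalClosed

variable {C : Type*} [Category C] [MonoidalCategory C] [MonoidalClosed C]

def isoUnitOfIhomUnitIso {X : C} (κ : (ihom (𝟙_ C)).obj (𝟙_ C) ≅ (ihom (𝟙_ C)).obj X ⊗ 𝟙_ C) :
    X ≅ 𝟙_ C :=
  (unitIsoSelf X).symm ≪≫ (ρ_ _).symm ≪≫ κ.symm ≪≫ unitIsoSelf (𝟙_ C)

variable [BraidedCategory C]

abbrev doubleDualMap (bot A : C) : A ⟶ (ihom ((ihom A).obj bot)).obj bot :=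
  curry ((β_ ((ihom A).obj bot) A).hom ≫ (ihom.ev A).app bot)

noncomputable def homEquivOfIsIsoDoubleDualMap (bot A B : C) [IsIso (doubleDualMap bot B)] :
    (A ⟶ B) ≃ ((ihom B).obj bot ⊗ A ⟶ bot) :=
  ((Iso.refl A).homCongr (asIso (doubleDualMap bot B))).trans
    ((ihom.adjunction ((ihom B).obj bot)).homEquiv A bot).symm

end MonoidalClosed

end CategoryTheory

theorem stmt4_general {C : Type*} [Category C] [MonoidalCategory C] [SymmetricCategory C]
    [MonoidalClosed C] (bot : C)
    (hdual : ∀ A : C, IsIso (MonoidalClosed.curry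
      ((β_ ((ihom A).obj bot) A).hom ≫ (ihom.ev A).app bot)))
    (κ : ∀ A B : C, (ihom A).obj B ≅ (ihom A).obj bot ⊗ B)
    (e : ∀ A : C, A ⟶ 𝟙_ C)
    (e_nat : ∀ {A B : C} (f : A ⟶ B), f ≫ e B = e A)
    (e_unit : e (𝟙_ C) = 𝟙 (𝟙_ C)) :
    ∀ A B : C, Nonempty (A ⟶ B) ∧ Subsingleton (A ⟶ B) := by
  have hbot : IsTerminal bot :=
    (IsTerminal.ofNatural e e_nat e_unit).ofIso
      (MonoidalClosed.isoUnitOfIhomUnitIso (κ (𝟙_ C) (𝟙_ C))).symm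
  intro A B
  have := hdual B
  let E := MonoidalClosed.homEquivOfIsIsoDoubleDualMap bot A B
  exact ⟨⟨E.symm (hbot.from _)⟩, ⟨fun f g => E.injective (hbot.hom_ext _ _)⟩⟩

/-- (No-deleting theorem) Let `C` be a compact closed category: a symmetric monoidal
closed category with a dualizing object `⊥` (the canonical map `A ⟶ [[A,⊥],⊥]` is an
isomorphism for all `A`) such that `[A,B] ≅ ¬A ⊗ B` naturally in `A` and `B`, where
`¬A = [A,⊥]`.  If there is a natural transformation `e_A : A ⟶ I` with `e_I = id_I`,
then every hom-set `Hom(A,B)` is a singleton. -/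
theorem stmt4 {C : Type*} [Category C] [MonoidalCategory C] [SymmetricCategory C]
    [MonoidalClosed C] (bot : C)
    (hdual : ∀ A : C, IsIso (MonoidalClosed.curry
      ((β_ ((ihom A).obj bot) A).hom ≫ (ihom.ev A).app bot)))
    (κ : ∀ A B : C, (ihom A).obj B ≅ (ihom A).obj bot ⊗ B)
    (κ_natB : ∀ (A : C) {B B' : C} (g : B ⟶ B'),
      (ihom A).map g ≫ (κ A B').hom = (κ A B).hom ≫ (𝟙 ((ihom A).obj bot) ⊗ₘ g))
    (κ_natA : ∀ {A A' : C} (f : A ⟶ A') (B : C),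
      (MonoidalClosed.pre f).app B ≫ (κ A B).hom
        = (κ A' B).hom ≫ ((MonoidalClosed.pre f).app bot ⊗ₘ 𝟙 B))
    (e : ∀ A : C, A ⟶ 𝟙_ C)
    (e_nat : ∀ {A B : C} (f : A ⟶ B), f ≫ e B = e A)
    (e_unit : e (𝟙_ C) = 𝟙 (𝟙_ C)) :
    ∀ A B : C, Nonempty (A ⟶ B) ∧ Subsingleton (A ⟶ B) :=
  stmt4_general bot hdual κ e e_nat e_unit
end

section
/- In any bicartesian closed category, the coproduct injections i₀ : A → A + B and i₁ : B → A + B are monomorphisms. -/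
/-!
Transposing the projection `T ⊗ A ⟶ A` gives the constant-map morphism `A ⟶ A ^^ T`, and
precomposing it with generalized elements `T ⟶ A` is injective: their transposes `snd ≫ f` are
distinguished after restricting along the diagonal. So `i : A ⟶ X` is mono as soon as this
morphism extends along `i` whenever `A` has a `T`-element. For `coprod.inl` the extension sends the
`B` summand to the constant function at any chosen `T`-element of `A`.
-/

open CategoryTheory CategoryTheory.Limits
open CartesianClosed CartesianMonoidalCategory MonoidalClosed

section

variable {C : Type*} [Category C] [CartesianMonoidalCategory C] [MonoidalClosed C]

lemma comp_curry_snd {T Y A : C} (f : Y ⟶ A) :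
    f ≫ curry (snd T A) = curry (snd T Y ≫ f) := by
  rw [← curry_natural_left, whiskerLeft_snd]

lemma comp_curry_snd_injective (T A : C) :
    Function.Injective fun f : T ⟶ A => f ≫ curry (snd T A) := by
  intro f g hfg
  have hsnd : snd T T ≫ f = snd T T ≫ g :=
    curry_injective (by simpa only [comp_curry_snd] using hfg)
  simpa using lift (𝟙 T) (𝟙 T) ≫= hsnd

lemma mono_of_forall_exists_comp_eq_curry_snd {A X : C} (i : A ⟶ X)
    (h : ∀ T, (T ⟶ A) → ∃ r : X ⟶ A ^^ T, i ≫ r = curry (snd T A)) : Mono i where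
  right_cancellation {T} f g hfg := by
    obtain ⟨r, hr⟩ := h T f
    apply comp_curry_snd_injective
    simp only [← hr, reassoc_of% hfg]

variable [HasBinaryCoproducts C]

lemma mono_coprod_inl (A B : C) : Mono (coprod.inl : A ⟶ A ⨿ B) :=
  mono_of_forall_exists_comp_eq_curry_snd _ fun T f =>
    ⟨coprod.desc (curry (snd T A)) (curry (fst T B ≫ f)), coprod.inl_desc _ _⟩

lemma mono_coprod_inr (A B : C) : Mono (coprod.inr : B ⟶ A ⨿ B) :=
  mono_of_forall_exists_comp_eq_curry_snd _ fun T f =>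
    ⟨coprod.desc (curry (fst T A ≫ f)) (curry (snd T B)), coprod.inr_desc _ _⟩

end

theorem stmt6_general {C : Type*} [Category C] [CartesianMonoidalCategory C] [MonoidalClosed C]
    [HasBinaryCoproducts C] (A B : C) :
    Mono (coprod.inl : A ⟶ A ⨿ B) ∧ Mono (coprod.inr : B ⟶ A ⨿ B) :=
  ⟨mono_coprod_inl A B, mono_coprod_inr A B⟩

/-- In any bicartesian closed category, the coproduct injections
`i₀ : A ⟶ A ⨿ B` and `i₁ : B ⟶ A ⨿ B` are monomorphisms. -/
theorem stmt6 {C : Type*} [Category C] [CartesianMonoidalCategory C] [MonoidalClosed C]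
    [HasBinaryCoproducts C] [HasInitial C] (A B : C) :
    Mono (coprod.inl : A ⟶ A ⨿ B) ∧ Mono (coprod.inr : B ⟶ A ⨿ B) :=
  stmt6_general A B
end

section
/- Let C be a bicartesian closed category that is not a preorder (i.e., some hom-set contains two distinct morphisms). Then for any morphisms f : 1 → A and g : 1 → B, the composites i₀ ∘ f and i₁ ∘ g : 1 → A + B are distinct, where i₀, i₁ are the coproduct injections. -/
open CategoryTheory CategoryTheory.Limits CategoryTheory.MonoidalCategory

/-!
If `f ≫ inl = g ≫ inr`, then composing with `coprod.desc (toUnit A ≫ x) (toUnit B ≫ y)`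
identifies any two global elements `x y : 𝟙_ C ⟶ Z`. In a closed category morphisms `X ⟶ Y` are
the global elements of `(ihom X).obj Y`, so every hom-set has at most one element.
-/

theorem SemiCartesianMonoidalCategory.subsingleton_unit_hom_of_comp_inl_eq_comp_inr {C : Type*}
    [Category C] [SemiCartesianMonoidalCategory C] {A B : C} [HasBinaryCoproduct A B]
    {f : 𝟙_ C ⟶ A} {g : 𝟙_ C ⟶ B} (h : f ≫ coprod.inl = g ≫ coprod.inr) (Z : C) :
    Subsingleton (𝟙_ C ⟶ Z) :=
  ⟨fun x y => by
    simpa only [Category.assoc, coprod.inl_desc, coprod.inr_desc,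
      SemiCartesianMonoidalCategory.comp_toUnit_assoc,
      SemiCartesianMonoidalCategory.toUnit_unit, Category.id_comp] using
      h =≫ coprod.desc (SemiCartesianMonoidalCategory.toUnit A ≫ x)
        (SemiCartesianMonoidalCategory.toUnit B ≫ y)⟩

theorem MonoidalClosed.isThin_of_subsingleton_unit_hom {C : Type*} [Category C]
    [MonoidalCategory C] [MonoidalClosed C] (h : ∀ Z : C, Subsingleton (𝟙_ C ⟶ Z)) :
    Quiver.IsThin C :=
  fun _ Y => have := h Y; MonoidalClosed.curryHomEquiv'.subsingleton

theorem stmt7_general {C : Type*} [Category C] [CartesianMonoidalCategory C] [MonoidalClosed C]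
    [HasBinaryCoproducts C]
    (hnp : ∃ (X Y : C) (h k : X ⟶ Y), h ≠ k)
    {A B : C} (f : 𝟙_ C ⟶ A) (g : 𝟙_ C ⟶ B) :
    f ≫ coprod.inl ≠ g ≫ coprod.inr := by
  obtain ⟨X, Y, h, k, hne⟩ := hnp
  intro heq
  have thin : Quiver.IsThin C := MonoidalClosed.isThin_of_subsingleton_unit_hom
    (SemiCartesianMonoidalCategory.subsingleton_unit_hom_of_comp_inl_eq_comp_inr heq)
  exact hne (Subsingleton.elim h k)

/-- In a bicartesian closed category that is not a preorder, for any morphisms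
`f : 1 ⟶ A` and `g : 1 ⟶ B` the composites with the two coproduct injections into
`A ⨿ B` are distinct. -/
theorem stmt7 {C : Type*} [Category C] [CartesianMonoidalCategory C] [MonoidalClosed C]
    [HasBinaryCoproducts C] [HasInitial C]
    (hnp : ∃ (X Y : C) (h k : X ⟶ Y), h ≠ k)
    {A B : C} (f : 𝟙_ C ⟶ A) (g : 𝟙_ C ⟶ B) :
    f ≫ coprod.inl ≠ g ≫ coprod.inr :=
  stmt7_general hnp f g
end

section
/- Let G be a group. Define a preorder on the set Sub(G) of subgroups of G by K ≤ H iff there exists g ∈ G with g⁻¹Kg ⊆ H. For a functor E : G → Set (a G-set), let δ(E) = { H ≤ G : ∃ x ∈ E with h·x = x for all h ∈ H }. Then δ(E) is downward-closed in (Sub(G), ≤); if there is a G-equivariant map E → F then δ(E) ⊆ δ(F); conversely δ(E) ⊆ δ(F) implies the existence of a G-equivariant map E → F; and every downward-closed subset of Sub(G) arises as δ(E) for some G-set E. Hence the poset reflection of the category of G-sets is isomorphic to the poset of downward-closed subsets of (Sub(G), ≤). -/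
/-!
A subgroup `H` fixes a point `x` iff `H ≤ stabilizer G x`, and the stabilizer of `g • x` is
`g (stabilizer G x) g⁻¹`; this gives downward closedness of `δ(X)`. An equivariant map can
only enlarge stabilizers, and conversely, if every `stabilizer G x` fixes some `y x ∈ Y`,
an equivariant map is obtained orbit by orbit. Finally, a downward-closed family `I` is
`δ` of the `G`-set `∐_{H ∈ I} G ⧸ H`, since the stabilizer of `gH` is `gHg⁻¹`.
-/

universe u

namespace MulAction

variable {G X Y : Type*} [Group G] [MulAction G X] [MulAction G Y]

theorem conj_mem_stabilizer_iff (g k : G) (x : X) :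
    g⁻¹ * k * g ∈ stabilizer G x ↔ k ∈ stabilizer G (g • x) := by
  simp only [mem_stabilizer_iff, mul_smul, inv_smul_eq_iff]

theorem le_stabilizer_smul_of_conj_mem {H K : Subgroup G} {g : G}
    (hg : ∀ k ∈ K, g⁻¹ * k * g ∈ H) {x : X} (hx : H ≤ stabilizer G x) :
    K ≤ stabilizer G (g • x) :=
  fun k hk => (conj_mem_stabilizer_iff g k x).1 (hx (hg k hk))

theorem stabilizer_le_stabilizer_apply (f : X →[G] Y) (x : X) :
    stabilizer G x ≤ stabilizer G (f x) :=
  fun g hg => by rw [mem_stabilizer_iff, ← map_smul, hg]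

theorem smul_eq_smul_of_stabilizer_le {x : X} {y : Y} (h : stabilizer G x ≤ stabilizer G y)
    {a b : G} (hab : a • x = b • x) : a • y = b • y := by
  have hx : a⁻¹ * b ∈ stabilizer G x := by
    rw [mem_stabilizer_iff, mul_smul, ← hab, inv_smul_smul]
  calc a • y = a • (a⁻¹ * b) • y := by rw [mem_stabilizer_iff.mp (h hx)]
    _ = b • y := by rw [smul_smul, mul_inv_cancel_left]

/-- A `G`-map is defined on each orbit by sending a chosen representative `r` to `y r` and
extending equivariantly; this is well defined because `stabilizer G r ≤ stabilizer G (y r)`. -/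
theorem nonempty_mulActionHom_of_stabilizer_le (y : X → Y)
    (hy : ∀ x, stabilizer G x ≤ stabilizer G (y x)) : Nonempty (X →[G] Y) := by
  let rep : X → X := fun x => (Quotient.mk (orbitRel G X) x).out
  have rep_smul (g : G) (x : X) : rep (g • x) = rep x :=
    congrArg Quotient.out (Quotient.sound ⟨g, rfl⟩)
  have exists_smul_rep (x : X) : ∃ t : G, t • rep x = x := by
    obtain ⟨g, hg⟩ := Quotient.mk_out (s := orbitRel G X) x
    exact ⟨g⁻¹, inv_smul_eq_iff.2 hg.symm⟩
  choose t ht using exists_smul_rep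
  refine ⟨⟨fun x => t x • y (rep x), fun g x => ?_⟩⟩
  change t (g • x) • y (rep (g • x)) = g • t x • y (rep x)
  rw [rep_smul, ← mul_smul]
  apply smul_eq_smul_of_stabilizer_le (hy _)
  rw [mul_smul, ht x, ← rep_smul g x]
  exact ht (g • x)

theorem stabilizer_sigma_mk {ι : Type*} {α : ι → Type*} [∀ i, MulAction G (α i)]
    (i : ι) (a : α i) : stabilizer G (Sigma.mk i a) = stabilizer G a := by
  ext g
  simp [mem_stabilizer_iff, Sigma.smul_mk]

theorem mem_stabilizer_quotient_mk_iff (H : Subgroup G) (g k : G) :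
    k ∈ stabilizer G (g : G ⧸ H) ↔ g⁻¹ * k * g ∈ H := by
  simpa using (conj_mem_stabilizer_iff g k ((1 : G) : G ⧸ H)).symm

theorem exists_le_stabilizer_sigma_quotient_iff {I : Set (Subgroup G)}
    (hI : ∀ H ∈ I, ∀ K : Subgroup G, (∃ g : G, ∀ k ∈ K, g⁻¹ * k * g ∈ H) → K ∈ I)
    (K : Subgroup G) :
    (∃ x : Σ H : I, G ⧸ (H : Subgroup G), K ≤ stabilizer G x) ↔ K ∈ I := by
  constructor
  · rintro ⟨⟨H, c⟩, hc⟩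
    induction c using QuotientGroup.induction_on with | H g => ?_
    rw [stabilizer_sigma_mk] at hc
    exact hI H H.2 K ⟨g, fun k hk => (mem_stabilizer_quotient_mk_iff _ g k).1 (hc hk)⟩
  · intro hK
    exact ⟨⟨⟨K, hK⟩, ((1 : G) : G ⧸ K)⟩, by rw [stabilizer_sigma_mk, stabilizer_quotient]⟩

end MulAction

open MulAction in
/-- For a group `G`, order the subgroups by `K ≤ H` iff `g⁻¹Kg ⊆ H` for some `g`, and
for a `G`-set `X` let `δ(X) = { H : ∃ x ∈ X fixed by every element of H }`.  Then:
`δ(X)` is downward closed; a `G`-equivariant map `X → Y` exists **iff** `δ(X) ⊆ δ(Y)`;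
and every downward-closed set of subgroups arises as `δ(X)` for some `G`-set `X`.
Hence the poset reflection of the category of `G`-sets is isomorphic to the poset of
downward-closed subsets of `(Sub(G), ≤)`. -/
theorem stmt13 {G : Type u} [Group G] :
    (∀ (X : Type u) [MulAction G X] (H K : Subgroup G),
        (∃ g : G, ∀ k ∈ K, g⁻¹ * k * g ∈ H) →
        (∃ x : X, ∀ h ∈ H, h • x = x) → (∃ x : X, ∀ k ∈ K, k • x = x)) ∧
    (∀ (X Y : Type u) [MulAction G X] [MulAction G Y],
        (∃ f : X → Y, ∀ (g : G) (x : X), f (g • x) = g • f x) ↔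
        (∀ H : Subgroup G,
          (∃ x : X, ∀ h ∈ H, h • x = x) → (∃ y : Y, ∀ h ∈ H, h • y = y))) ∧
    (∀ I : Set (Subgroup G),
        (∀ H ∈ I, ∀ K : Subgroup G, (∃ g : G, ∀ k ∈ K, g⁻¹ * k * g ∈ H) → K ∈ I) →
        ∃ (X : Type u) (inst : MulAction G X),
          letI : MulAction G X := inst
          ∀ H : Subgroup G, H ∈ I ↔ ∃ x : X, ∀ h ∈ H, h • x = x) := by
  refine ⟨fun X _ H K ⟨g, hg⟩ ⟨x, hx⟩ => ⟨g • x, le_stabilizer_smul_of_conj_mem hg hx⟩,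
    fun X Y _ _ => ⟨?_, ?_⟩,
    fun I hI => ⟨_, inferInstance, fun H => (exists_le_stabilizer_sigma_quotient_iff hI H).symm⟩⟩
  · rintro ⟨f, hf⟩ H ⟨x, hx⟩
    exact ⟨f x, fun h hh => stabilizer_le_stabilizer_apply ⟨f, hf⟩ x (hx h hh)⟩
  · intro hδ
    choose y hy using fun x : X => hδ (stabilizer G x) ⟨x, fun _ => id⟩
    obtain ⟨f⟩ := nonempty_mulActionHom_of_stabilizer_le y hy
    exact ⟨f, f.map_smul⟩
end

section
/- The poset reflection of the category of ℤ-sets (sets with an automorphism, with equivariant maps) is isomorphic to the poset of downward-closed subsets of (ℕ, |)ᵒᵖ, equivalently the poset of upward-closed subsets of ℕ under divisibility. -/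
/-!
Send a `ℤ`-set `(A, e)` to `periods e`, the set of `n` such that some point satisfies
`eⁿ x = x`; it is the upward closure under `∣` of the minimal periods of the points
(an infinite orbit contributing `0`). An equivariant map carries a point of period `n` to
a point of period `n`. Conversely, if `periods e ⊆ periods e'`, pick a representative `x`
of each orbit and a point `y` whose period divides the minimal period of `x`; then
`eᵏ x ↦ e'ᵏ y` is well defined on the orbit. An upward-closed `S` is realised by the shift
on `Σ n ∈ S, ℤ/nℤ`, where `ZMod 0 = ℤ` supplies the free orbit.
-/

open Function Equiv Equiv.Perm

namespace Function

variable {α β : Type*}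

def periods (f : α → α) : Set ℕ := {n | ∃ x, IsPeriodicPt f n x}

theorem mem_periods_of_dvd {f : α → α} {m n : ℕ} (hmn : m ∣ n) (hm : m ∈ periods f) :
    n ∈ periods f :=
  let ⟨x, hx⟩ := hm
  ⟨x, hx.trans_dvd hmn⟩

theorem Semiconj.periods_subset {fa : α → α} {fb : β → β} {g : α → β}
    (h : Semiconj g fa fb) : periods fa ⊆ periods fb :=
  fun _ ⟨x, hx⟩ => ⟨g x, hx.map h⟩

end Function

namespace Equiv.Perm

variable {α β : Type*}

theorem zpow_apply_eq_zpow_apply_iff (e : Perm α) (x : α) (i j : ℤ) :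
    (e ^ i) x = (e ^ j) x ↔ i ≡ j [ZMOD minimalPeriod e x] := by
  have hj : (e ^ j) x = (e ^ i) ((e ^ (j - i)) x) := by
    rw [← mul_apply, ← zpow_add, add_sub_cancel]
  rw [hj, (e ^ i).injective.eq_iff, eq_comm, Int.modEq_iff_dvd]
  exact MulAction.zpow_smul_eq_iff_minimalPeriod_dvd (a := e)

theorem exists_sameCycle_representative (e : Perm α) :
    ∃ r : α → α, (∀ x, SameCycle e (r x) x) ∧ ∀ x, r (e x) = r x :=
  ⟨fun x => (⟦x⟧ : Quotient (SameCycle.setoid e)).out, fun x => Quotient.mk_out (s := SameCycle.setoid e) x,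
    fun _ => congrArg Quotient.out (Quotient.sound (sameCycle_apply_left.2 SameCycle.rfl))⟩

theorem exists_semiconj_of_isPeriodicPt_minimalPeriod (e : Perm α) (e' : Perm β)
    (h : ∀ x, ∃ y, IsPeriodicPt e' (minimalPeriod e x) y) : ∃ g : α → β, Semiconj g e e' := by
  obtain ⟨r, hr_sameCycle, hr_apply⟩ := exists_sameCycle_representative e
  choose k hk using hr_sameCycle
  choose y hy using h
  refine ⟨fun x => (e' ^ k x) (y (r x)), fun x => ?_⟩
  have hk_apply : k (e x) ≡ 1 + k x [ZMOD minimalPeriod e (r x)] := by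
    rw [← zpow_apply_eq_zpow_apply_iff, zpow_one_add, mul_apply, hk x, ← hr_apply x, hk (e x)]
  have hdvd : (minimalPeriod e' (y (r x)) : ℤ) ∣ minimalPeriod e (r x) :=
    Int.natCast_dvd_natCast.2 (hy (r x)).minimalPeriod_dvd
  have hy_apply := (zpow_apply_eq_zpow_apply_iff e' (y (r x)) _ _).2 (hk_apply.of_dvd hdvd)
  simp only [hr_apply x, hy_apply, zpow_one_add, mul_apply]

theorem exists_semiconj_iff_periods_subset (e : Perm α) (e' : Perm β) :
    (∃ g : α → β, Semiconj g e e') ↔ periods e ⊆ periods e' :=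
  ⟨fun ⟨_, hg⟩ => hg.periods_subset, fun h =>
    exists_semiconj_of_isPeriodicPt_minimalPeriod e e' fun x =>
      h ⟨x, isPeriodicPt_minimalPeriod e x⟩⟩

end Equiv.Perm

def zmodShift (S : Set ℕ) : Perm (Σ n : S, ZMod n) :=
  Perm.sigmaCongrRight fun _ => Equiv.addRight 1

theorem zmodShift_iterate (S : Set ℕ) (m : ℕ) (p : Σ n : S, ZMod n) :
    (zmodShift S)^[m] p = ⟨p.1, p.2 + m⟩ := by
  induction m with
  | zero => simp
  | succ m ih =>
    rw [iterate_succ_apply', ih]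
    simp [zmodShift, add_assoc]

theorem isPeriodicPt_zmodShift_iff {S : Set ℕ} {m : ℕ} {p : Σ n : S, ZMod n} :
    IsPeriodicPt (zmodShift S) m p ↔ (p.1 : ℕ) ∣ m := by
  simp [IsPeriodicPt, IsFixedPt, zmodShift_iterate, Sigma.ext_iff, ZMod.natCast_eq_zero_iff]

theorem periods_zmodShift {S : Set ℕ} (hS : ∀ m n : ℕ, m ∣ n → m ∈ S → n ∈ S) :
    periods (zmodShift S) = S := by
  ext m
  constructor
  · rintro ⟨p, hp⟩
    exact hS _ _ (isPeriodicPt_zmodShift_iff.1 hp) p.1.2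
  · intro hm
    exact ⟨⟨⟨m, hm⟩, 0⟩, isPeriodicPt_zmodShift_iff.2 dvd_rfl⟩

/-- The poset reflection of the category of `ℤ`-sets (sets with an automorphism, with
equivariant maps) is isomorphic to the poset of upward-closed subsets of `ℕ` under
divisibility: there is an assignment `δ` of an upward-closed (under `∣`) subset of `ℕ`
to every `ℤ`-set such that an equivariant map `E → F` exists iff `δ E ⊆ δ F`, and
every upward-closed subset of `(ℕ, ∣)` is of the form `δ E`. -/
theorem stmt14 :
    ∃ δ : ((A : Type) × (A ≃ A)) → Set ℕ,
      (∀ (E : (A : Type) × (A ≃ A)) (m n : ℕ), m ∣ n → m ∈ δ E → n ∈ δ E) ∧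
      (∀ E E' : (A : Type) × (A ≃ A),
        (∃ f : E.1 → E'.1, ∀ x : E.1, f (E.2 x) = E'.2 (f x)) ↔ δ E ⊆ δ E') ∧
      (∀ S : Set ℕ, (∀ m n : ℕ, m ∣ n → m ∈ S → n ∈ S) →
        ∃ E : (A : Type) × (A ≃ A), δ E = S) :=
  ⟨fun E => periods E.2, fun _ _ _ => mem_periods_of_dvd,
    fun E E' => exists_semiconj_iff_periods_subset E.2 E'.2,
    fun S hS => ⟨⟨_, zmodShift S⟩, periods_zmodShift hS⟩⟩
end

section
/- Let C be a cartesian closed category with a natural numbers object (N, Z, s). If C is not a preorder (some hom-set has two distinct morphisms), then the numeral maps are injective: for m, n ∈ ℕ, if s^m ∘ Z = s^n ∘ Z as morphisms 1 → N, then m = n. -/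
open CategoryTheory CategoryTheory.Limits CategoryTheory.MonoidalCategory

/-- A natural numbers object in a category with a terminal object `𝟙_ C`:
for every `a : 1 ⟶ A` and `f : A ⟶ A` there is a unique `g : N ⟶ A` with
`g ∘ Z = a` and `g ∘ s = f ∘ g`. -/
structure IsNNO {C : Type*} [Category C] [CartesianMonoidalCategory C]
    (N : C) (Z : 𝟙_ C ⟶ N) (s : N ⟶ N) : Prop where
  ex_unique : ∀ {A : C} (a : 𝟙_ C ⟶ A) (f : A ⟶ A),
    ∃! g : N ⟶ A, Z ≫ g = a ∧ s ≫ g = g ≫ f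

/-- The `n`-fold composite `s^n : N ⟶ N`. -/
def iterateHom {C : Type*} [Category C] {N : C} (s : N ⟶ N) : ℕ → (N ⟶ N)
  | 0 => 𝟙 N
  | n + 1 => iterateHom s n ≫ s

/-!
The step `(a, b) ↦ (s a, a)` on `N ⊗ N`, started at `(Z, Z)`, recurses to `k ↦ (k, k - 1)`, so
its second component is a retraction of `s` and `s` is mono; hence `s^{m+1} Z = s^{n+1} Z` gives
`s^m Z = s^n Z`. It remains to see `s x ≠ Z`. Recursion sends `Z` to any global element `a` of
any object and everything in the image of `s` to any other global element `b`, so `s x = Z`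
would force `a = b`. In a closed category `X ⟶ Y` embeds into the global elements of `[X, Y]`,
so the category would be a preorder.
-/

lemma CategoryTheory.MonoidalClosed.subsingleton_hom_of_subsingleton_globalElements
    {C : Type*} [Category C] [MonoidalCategory C] [MonoidalClosed C]
    (h : ∀ A : C, Subsingleton (𝟙_ C ⟶ A)) (X Y : C) : Subsingleton (X ⟶ Y) :=
  ⟨fun _ _ => curry'_injective (Subsingleton.elim _ _)⟩

namespace CategoryTheory.IsNNO

open CartesianMonoidalCategory

variable {C : Type*} [Category C] [CartesianMonoidalCategory C]
  {N : C} {Z : 𝟙_ C ⟶ N} {s : N ⟶ N}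

lemma hom_ext (hN : IsNNO N Z s) {A : C} {f : A ⟶ A} {g g' : N ⟶ A}
    (hZ : Z ≫ g = Z ≫ g') (hs : s ≫ g = g ≫ f) (hs' : s ≫ g' = g' ≫ f) : g = g' := by
  obtain ⟨_, -, huniq⟩ := hN.ex_unique (Z ≫ g) f
  exact (huniq g ⟨rfl, hs⟩).trans (huniq g' ⟨hZ.symm, hs'⟩).symm

lemma exists_retraction_succ (hN : IsNNO N Z s) : ∃ p : N ⟶ N, s ≫ p = 𝟙 N := by
  obtain ⟨P, ⟨hPZ, hPs⟩, -⟩ := hN.ex_unique (lift Z Z) (lift (fst N N ≫ s) (fst N N))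
  have hPfst : P ≫ fst N N = 𝟙 N :=
    hN.hom_ext (f := s) (by simp [reassoc_of% hPZ]) (by simp [reassoc_of% hPs]) (by simp)
  exact ⟨P ≫ snd N N, by simp [reassoc_of% hPs, hPfst]⟩

lemma mono_succ (hN : IsNNO N Z s) : Mono s := by
  obtain ⟨p, hp⟩ := hN.exists_retraction_succ
  have : IsSplitMono s := .mk' ⟨p, hp⟩
  infer_instance

lemma subsingleton_globalElements_of_succ_eq_zero (hN : IsNNO N Z s) {x : 𝟙_ C ⟶ N}
    (hx : x ≫ s = Z) (A : C) : Subsingleton (𝟙_ C ⟶ A) := by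
  refine ⟨fun a b => ?_⟩
  obtain ⟨t, ⟨htZ, hts⟩, -⟩ := hN.ex_unique a (toUnit A ≫ b)
  calc a = x ≫ s ≫ t := by rw [← htZ, ← hx, Category.assoc]
    _ = (x ≫ t ≫ toUnit A) ≫ b := by rw [hts]; simp
    _ = b := by rw [toUnit_unique (x ≫ t ≫ toUnit A) (𝟙 _), Category.id_comp]

lemma comp_succ_ne_zero [MonoidalClosed C] (hN : IsNNO N Z s)
    (hnp : ∃ (X Y : C) (f g : X ⟶ Y), f ≠ g) (x : 𝟙_ C ⟶ N) : x ≫ s ≠ Z := by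
  intro hx
  obtain ⟨X, Y, f, g, hfg⟩ := hnp
  have := MonoidalClosed.subsingleton_hom_of_subsingleton_globalElements
    (hN.subsingleton_globalElements_of_succ_eq_zero hx) X Y
  exact hfg (Subsingleton.elim f g)

end CategoryTheory.IsNNO

/-- In a cartesian closed category with a natural numbers object `(N, Z, s)` that is
not a preorder, the numerals `n̄ = sⁿ ∘ Z : 1 ⟶ N` are pairwise distinct. -/
theorem stmt17 {C : Type*} [Category C] [CartesianMonoidalCategory C] [MonoidalClosed C]
    {N : C} {Z : 𝟙_ C ⟶ N} {s : N ⟶ N} (hN : IsNNO N Z s)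
    (hnp : ∃ (X Y : C) (f g : X ⟶ Y), f ≠ g)
    (m n : ℕ) (h : Z ≫ iterateHom s m = Z ≫ iterateHom s n) : m = n := by
  have succ_ne_zero := hN.comp_succ_ne_zero hnp
  have := hN.mono_succ
  induction m generalizing n with
  | zero =>
    cases n with
    | zero => rfl
    | succ n =>
      exact (succ_ne_zero (Z ≫ iterateHom s n) (by simpa [iterateHom] using h.symm)).elim
  | succ m ih =>
    cases n with
    | zero => exact (succ_ne_zero (Z ≫ iterateHom s m) (by simpa [iterateHom] using h)).elim
    | succ n =>
      simp only [iterateHom, ← Category.assoc, cancel_mono] at h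
      rw [ih n h]
end
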